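/- arXiv:cs/0008001 — 5 statements merged into one kernel-verified Lean document; each statement's English description precedes it below -/
import Mathlib

section
/- An assignment χ of Boolean values to the relational variables violates some transitivity constraint if and only if some cycle in the labeled graph G(E,χ) contains exactly one 0-edge. -/
/-!
A violated constraint along the path `i₁, …, i_k` is the same thing as the cycle
`[i₁, …, i_k, i₁]` whose closing edge `(i_k, i₁)` is its only 0-edge. Conversely, a cycle with
exactly one 0-edge can be rotated so that this 0-edge becomes the closing edge; its remaining
edges are then the 1-edges of a path whose endpoints are joined by a 0-edge.
-/

/-- The list of edges of the cycle determined by vertex list `l = [i₁,…,i_k]`: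
successive pairs plus the closing edge `(i_k, i₁)`. -/
def cycEdges (l : List ℕ) : List (ℕ × ℕ) := l.zip (l.rotate 1)

/-- `l` is (the vertex list of) a cycle in the graph `G(E)`. -/
def IsCycle (E : ℕ → ℕ → Prop) (l : List ℕ) : Prop :=
  3 ≤ l.length ∧ ∀ p ∈ cycEdges l, E p.1 p.2

/-- The number of 0-edges of the cycle `l` under the labeling `χ`. -/
def numZeroEdges (χ : ℕ → ℕ → Bool) (l : List ℕ) : ℕ :=
  ((cycEdges l).filter (fun p => !χ p.1 p.2)).length

/-- The assignment `χ` violates some transitivity constraint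
`e_{[i₁,i₂]} ∧ ⋯ ∧ e_{[i_{k-1},i_k]} ⇒ e_{[i₁,i_k]}` over `E`. -/
def ViolatesTrans (E : ℕ → ℕ → Prop) (χ : ℕ → ℕ → Bool) : Prop :=
  ∃ l : List ℕ, 3 ≤ l.length ∧ l.Chain' E ∧
    (∀ p ∈ l.zip l.tail, χ p.1 p.2 = true) ∧
    E (l.headD 0) (l.getLastD 0) ∧ χ (l.headD 0) (l.getLastD 0) = false

/-- The simple cycle (or acyclic path) `l` has a chord: an edge of `G(E)` joining two
vertices at positions `p < q` that are not adjacent in the cycle. -/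
def HasChord (E : ℕ → ℕ → Prop) (l : List ℕ) : Prop :=
  ∃ p q : ℕ, p < q ∧ q < l.length ∧ p + 1 < q ∧ ¬(p = 0 ∧ q = l.length - 1) ∧
    E (l.getD p 0) (l.getD q 0)

theorem List.zip_rotate {α β : Type*} {l : List α} {m : List β} (h : l.length = m.length)
    (n : ℕ) : (l.rotate n).zip (m.rotate n) = (l.zip m).rotate n := by
  apply List.ext_getElem (by simp [h])
  intro i _ _
  simp [List.getElem_rotate, h]

theorem List.zip_cons_append_singleton {α β : Type*} (a : α) (t : List α) (m : List β) (b : β)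
    (h : t.length = m.length) :
    (a :: t).zip (m ++ [b]) = (a :: t).zip m ++ [((a :: t).getLast (List.cons_ne_nil a t), b)] := by
  induction t generalizing a m with
  | nil => obtain rfl := List.eq_nil_of_length_eq_zero h.symm; rfl
  | cons c t ih =>
    obtain ⟨d, m, rfl⟩ := List.exists_cons_of_length_eq_add_one h.symm
    simp [ih c m (by simpa using h)]

theorem List.getLast_rotate_succ {α : Type*} {l : List α} {k : ℕ} (hk : k < l.length) :
    (l.rotate (k + 1)).getLast (by simp [← List.length_pos_iff]; omega) = l[k] := by
  rw [List.getLast_eq_getElem, List.getElem_rotate]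
  congr 1
  simp only [List.length_rotate]
  rw [show l.length - 1 + (k + 1) = k + l.length by omega, Nat.add_mod_right, Nat.mod_eq_of_lt hk]

theorem List.isChain_iff_forall_mem_zip_tail {α : Type*} {R : α → α → Prop} {l : List α} :
    l.IsChain R ↔ ∀ p ∈ l.zip l.tail, R p.1 p.2 := by
  induction l using List.twoStepInduction <;> simp_all

theorem List.getLastD_cons_eq_getLast {α : Type*} (a d : α) (t : List α) :
    (a :: t).getLastD d = (a :: t).getLast (List.cons_ne_nil a t) := by
  rw [List.getLastD_eq_getLast?, List.getLast?_eq_some_getLast (List.cons_ne_nil a t),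
    Option.getD_some]

theorem cycEdges_rotate (l : List ℕ) (n : ℕ) : cycEdges (l.rotate n) = (cycEdges l).rotate n := by
  rw [cycEdges, cycEdges, List.rotate_rotate, Nat.add_comm, ← List.rotate_rotate]
  exact List.zip_rotate (List.length_rotate l 1).symm n

theorem cycEdges_cons (a : ℕ) (t : List ℕ) :
    cycEdges (a :: t) = (a :: t).zip t ++ [((a :: t).getLast (List.cons_ne_nil a t), a)] := by
  rw [cycEdges, List.rotate_cons_succ, List.rotate_zero, List.zip_cons_append_singleton _ _ _ _ rfl]

theorem IsCycle.rotate {E : ℕ → ℕ → Prop} {l : List ℕ} (h : IsCycle E l) (n : ℕ) :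
    IsCycle E (l.rotate n) := by
  refine ⟨by simpa using h.1, fun p hp => h.2 p ?_⟩
  rwa [cycEdges_rotate, List.mem_rotate] at hp

theorem numZeroEdges_rotate (χ : ℕ → ℕ → Bool) (l : List ℕ) (n : ℕ) :
    numZeroEdges χ (l.rotate n) = numZeroEdges χ l := by
  rw [numZeroEdges, numZeroEdges, cycEdges_rotate, ((List.rotate_perm _ n).filter _).length_eq]

theorem exists_rotate_eq_cons_of_mem_cycEdges {l : List ℕ} {e : ℕ × ℕ} (he : e ∈ cycEdges l) :
    ∃ n a t, l.rotate n = a :: t ∧ e = ((a :: t).getLast (List.cons_ne_nil a t), a) := by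
  obtain ⟨k, hk, rfl⟩ := List.getElem_of_mem he
  have hkl : k < l.length := by simpa [cycEdges] using hk
  obtain ⟨a, t, hat⟩ := List.exists_cons_of_ne_nil (l := l.rotate (k + 1))
    (by simp [← List.length_pos_iff]; omega)
  refine ⟨k + 1, a, t, hat, ?_⟩
  rw [← List.getLast_rotate_succ hk]
  simp_rw [← cycEdges_rotate, hat, cycEdges_cons]
  simp

theorem isCycle_cons_iff {E : ℕ → ℕ → Prop} (hEsym : Symmetric E) (a : ℕ) (t : List ℕ) :
    IsCycle E (a :: t) ↔
      3 ≤ (a :: t).length ∧ (a :: t).IsChain E ∧ E a ((a :: t).getLast (List.cons_ne_nil a t)) := by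
  rw [IsCycle, cycEdges_cons, List.forall_mem_append, List.forall_mem_singleton,
    List.isChain_iff_forall_mem_zip_tail, List.tail_cons]
  exact and_congr_right' (and_congr_right' ⟨fun h => hEsym h, fun h => hEsym h⟩)

theorem numZeroEdges_cons_eq_one_iff {χ : ℕ → ℕ → Bool} {a : ℕ} {t : List ℕ}
    (h : χ ((a :: t).getLast (List.cons_ne_nil a t)) a = false) :
    numZeroEdges χ (a :: t) = 1 ↔ ∀ p ∈ (a :: t).zip t, χ p.1 p.2 = true := by
  simp [numZeroEdges, cycEdges_cons, h]

theorem stmt0_general (E : ℕ → ℕ → Prop) (χ : ℕ → ℕ → Bool)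
    (hEsym : Symmetric E) (hχsym : ∀ i j, χ i j = χ j i) :
    ViolatesTrans E χ ↔ ∃ l : List ℕ, IsCycle E l ∧ numZeroEdges χ l = 1 := by
  constructor
  · rintro ⟨_ | ⟨a, t⟩, hlen, hchain, hones, hE, hχ⟩
    · simp at hlen
    rw [List.headD_cons, List.getLastD_cons_eq_getLast] at hE hχ
    exact ⟨a :: t, (isCycle_cons_iff hEsym a t).2 ⟨hlen, hchain, hE⟩,
      (numZeroEdges_cons_eq_one_iff (hχsym _ _ ▸ hχ)).2 hones⟩
  · rintro ⟨l, hcyc, hnum⟩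
    obtain ⟨e, he, hχe⟩ : ∃ e ∈ cycEdges l, χ e.1 e.2 = false := by
      simpa using List.length_filter_pos_iff.1 (hnum ▸ Nat.one_pos : 0 < numZeroEdges χ l)
    obtain ⟨n, a, t, hat, rfl⟩ := exists_rotate_eq_cons_of_mem_cycEdges he
    obtain ⟨hlen, hchain, hE⟩ := (isCycle_cons_iff hEsym a t).1 (hat ▸ hcyc.rotate n)
    have hones := (numZeroEdges_cons_eq_one_iff hχe).1
      (hat ▸ (numZeroEdges_rotate χ l n).trans hnum)
    refine ⟨a :: t, hlen, hchain, hones, ?_, ?_⟩ <;>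
      rw [List.headD_cons, List.getLastD_cons_eq_getLast]
    · exact hE
    · exact hχsym _ _ ▸ hχe

theorem stmt0 (N : ℕ) (E : ℕ → ℕ → Prop) (χ : ℕ → ℕ → Bool)
    (hEsym : Symmetric E) (hχsym : ∀ i j, χ i j = χ j i)
    (hEdom : ∀ i j, E i j → i < N ∧ j < N ∧ i ≠ j) :
    ViolatesTrans E χ ↔ ∃ l : List ℕ, IsCycle E l ∧ numZeroEdges χ l = 1 :=
  stmt0_general E χ hEsym hχsym
end

section
/- In a chordal graph, an assignment of 0/1 labels to edges yields no cycle with exactly one 0-edge if and only if it yields no triangle with exactly one 0-edge. Equivalently, satisfying the transitivity constraints for all triangles of a chordal graph suffices to satisfy all transitivity constraints. -/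
namespace List

variable {α : Type*}

theorem exists_eq_append_cons_append_cons_of_not_nodup {l : List α} (h : ¬l.Nodup) :
    ∃ A v B C, l = A ++ v :: (B ++ v :: C) := by
  obtain ⟨v, hv⟩ : ∃ v, [v, v] <+ l := by simpa [nodup_iff_sublist] using h
  obtain ⟨r, r', rfl, hr, hr'⟩ := cons_sublist_iff.1 hv
  obtain ⟨A, B, rfl⟩ := append_of_mem hr
  obtain ⟨B', C, rfl⟩ := append_of_mem (singleton_sublist.1 hr')
  exact ⟨A, v, B ++ B', C, by simp⟩

theorem exists_eq_append_getElem_append_getElem {l : List α} {p q : ℕ} (hpq : p < q)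
    (hq : q < l.length) :
    ∃ A B C, l = A ++ l[p] :: (B ++ l[q] :: C) ∧ A.length = p ∧ B.length = q - p - 1 := by
  refine ⟨l.take p, (l.drop (p + 1)).take (q - p - 1), l.drop (q + 1), ?_, by simp; omega,
    by simp; omega⟩
  have hdrop : (l.drop (p + 1)).drop (q - p - 1) = l[q] :: l.drop (q + 1) := by
    rw [drop_drop, show p + 1 + (q - p - 1) = q by omega, drop_eq_getElem_cons hq]
  rw [← hdrop, take_append_drop, ← drop_eq_getElem_cons (by omega), take_append_drop]

end List

theorem cycEdges_cons_s10 (v : ℕ) (L : List ℕ) : cycEdges (v :: L) = (v :: L).zip (L ++ [v]) := by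
  simp [cycEdges]

theorem cycEdges_cons_append_cons (v w : ℕ) (B D : List ℕ) :
    cycEdges (v :: (B ++ w :: D)) = (v :: B).zip (B ++ [w]) ++ (w :: D).zip (D ++ [v]) := by
  rw [cycEdges_cons_s10, ← List.zip_append (by simp)]
  simp

theorem cycEdges_append_comm (A B : List ℕ) : (cycEdges (B ++ A)).Perm (cycEdges (A ++ B)) := by
  rw [← List.rotate_append_length_eq, cycEdges_rotate]
  exact List.rotate_perm _ _

theorem numZeroEdges_eq_countP (χ : ℕ → ℕ → Bool) (l : List ℕ) :
    numZeroEdges χ l = (cycEdges l).countP (fun p => !χ p.1 p.2) :=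
  List.countP_eq_length_filter.symm

theorem IsCycle.append_comm {E : ℕ → ℕ → Prop} {A B : List ℕ} (h : IsCycle E (A ++ B)) :
    IsCycle E (B ++ A) :=
  ⟨by simpa [add_comm] using h.1, fun p hp => h.2 p ((cycEdges_append_comm A B).subset hp)⟩

theorem numZeroEdges_append_comm (χ : ℕ → ℕ → Bool) (A B : List ℕ) :
    numZeroEdges χ (B ++ A) = numZeroEdges χ (A ++ B) := by
  simp only [numZeroEdges_eq_countP, (cycEdges_append_comm A B).countP_eq]

theorem isCycle_triple {E : ℕ → ℕ → Prop} {a b c : ℕ} :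
    IsCycle E [a, b, c] ↔ E a b ∧ E b c ∧ E c a := by
  simp [IsCycle, cycEdges]

theorem numZeroEdges_triple (χ : ℕ → ℕ → Bool) (a b c : ℕ) :
    numZeroEdges χ [a, b, c] =
      (if χ a b then 0 else 1) + (if χ b c then 0 else 1) + (if χ c a then 0 else 1) := by
  cases hab : χ a b <;> cases hbc : χ b c <;> cases hca : χ c a <;>
    simp [numZeroEdges_eq_countP, cycEdges, hab, hbc, hca]

theorem numZeroEdges_pair_ne_one {χ : ℕ → ℕ → Bool} (hχsym : ∀ i j, χ i j = χ j i) (a b : ℕ) :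
    numZeroEdges χ [a, b] ≠ 1 := by
  cases h : χ a b <;> simp [numZeroEdges_eq_countP, cycEdges, h, hχsym b a]

section

variable {E : ℕ → ℕ → Prop} {χ : ℕ → ℕ → Bool}

theorem label_eq_false_of_zero_loop (hsym : Symmetric E) (hχsym : ∀ i j, χ i j = χ j i)
    (htri : ∀ i j k, E i j → E j k → E k i → numZeroEdges χ [i, j, k] ≠ 1)
    {v b : ℕ} (hvv : E v v) (hvb : E v b) (hloop : χ v v = false) : χ v b = false := by
  cases h : χ v b
  · rfl
  · refine absurd ?_ (htri v v b hvv hvb (hsym hvb))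
    simp [numZeroEdges_triple, hloop, hχsym b v, h]

theorem three_le_length_of_numZeroEdges_split (hsym : Symmetric E)
    (hχsym : ∀ i j, χ i j = χ j i)
    (htri : ∀ i j k, E i j → E j k → E k i → numZeroEdges χ [i, j, k] ≠ 1)
    {v : ℕ} {B D : List ℕ} (hlen : 2 ≤ B.length + D.length)
    (hB : ∀ p ∈ cycEdges (v :: B), E p.1 p.2) (hD : ∀ p ∈ cycEdges (v :: D), E p.1 p.2)
    (hB1 : numZeroEdges χ (v :: B) = 1) (hD0 : numZeroEdges χ (v :: D) = 0) :
    3 ≤ (v :: B).length :=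
  match B, D with
  | [], [] => by simp at hlen
  | [], b :: D => by
    have hloop : χ v v = false := by simpa [numZeroEdges_eq_countP, cycEdges] using hB1
    have hvb : (v, b) ∈ cycEdges (v :: b :: D) := by simp [cycEdges_cons_s10]
    have hone : χ v b = true := by
      simpa using (List.countP_eq_zero.1 ((numZeroEdges_eq_countP χ _).symm.trans hD0)) _ hvb
    have hzero := label_eq_false_of_zero_loop hsym hχsym htri (hB (v, v) (by simp [cycEdges]))
      (hD (v, b) hvb) hloop
    simp [hone] at hzero
  | [m], _ => absurd hB1 (numZeroEdges_pair_ne_one hχsym v m)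
  | _ :: _ :: _, _ => by simp

theorem exists_shorter_of_repeat (hsym : Symmetric E) (hχsym : ∀ i j, χ i j = χ j i)
    (htri : ∀ i j k, E i j → E j k → E k i → numZeroEdges χ [i, j, k] ≠ 1)
    {v : ℕ} {B D : List ℕ} (hlen : 2 ≤ B.length + D.length)
    (hl : IsCycle E (v :: (B ++ v :: D))) (h1 : numZeroEdges χ (v :: (B ++ v :: D)) = 1) :
    ∃ l, IsCycle E l ∧ numZeroEdges χ l = 1 ∧ l.length < B.length + D.length + 2 := by
  have hsplit : cycEdges (v :: (B ++ v :: D)) = cycEdges (v :: B) ++ cycEdges (v :: D) := by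
    rw [cycEdges_cons_append_cons, cycEdges_cons_s10, cycEdges_cons_s10]
  have hB : ∀ p ∈ cycEdges (v :: B), E p.1 p.2 := fun p hp =>
    hl.2 p (hsplit ▸ List.mem_append_left _ hp)
  have hD : ∀ p ∈ cycEdges (v :: D), E p.1 p.2 := fun p hp =>
    hl.2 p (hsplit ▸ List.mem_append_right _ hp)
  have hz : numZeroEdges χ (v :: B) + numZeroEdges χ (v :: D) = 1 := by
    simpa only [numZeroEdges_eq_countP, hsplit, List.countP_append] using h1
  obtain ⟨hB1, hD0⟩ | ⟨hD1, hB0⟩ :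
      numZeroEdges χ (v :: B) = 1 ∧ numZeroEdges χ (v :: D) = 0 ∨
      numZeroEdges χ (v :: D) = 1 ∧ numZeroEdges χ (v :: B) = 0 := by omega
  · refine ⟨v :: B, ⟨?_, hB⟩, hB1, by simp⟩
    exact three_le_length_of_numZeroEdges_split hsym hχsym htri hlen hB hD hB1 hD0
  · refine ⟨v :: D, ⟨?_, hD⟩, hD1, by simp⟩
    exact three_le_length_of_numZeroEdges_split hsym hχsym htri (by omega) hD hB hD1 hB0

theorem exists_shorter_of_chord (hsym : Symmetric E) (hχsym : ∀ i j, χ i j = χ j i)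
    {v w : ℕ} {B D : List ℕ} (hB : B ≠ []) (hD : D ≠ []) (hvw : E v w)
    (hl : IsCycle E (v :: (B ++ w :: D))) (h1 : numZeroEdges χ (v :: (B ++ w :: D)) = 1) :
    ∃ l, IsCycle E l ∧ numZeroEdges χ l = 1 ∧ l.length < B.length + D.length + 2 := by
  set X := (v :: B).zip (B ++ [w])
  set Y := (w :: D).zip (D ++ [v])
  have hsplit : cycEdges (v :: (B ++ w :: D)) = X ++ Y := cycEdges_cons_append_cons v w B D
  have hX : cycEdges (v :: (B ++ [w])) = X ++ [(w, v)] := by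
    simpa using cycEdges_cons_append_cons v w B []
  have hY : cycEdges (w :: (D ++ [v])) = Y ++ [(v, w)] := by
    simpa using cycEdges_cons_append_cons w v D []
  have hB' := List.length_pos_iff.2 hB
  have hD' := List.length_pos_iff.2 hD
  have hcycX : IsCycle E (v :: (B ++ [w])) := by
    refine ⟨by simp; omega, ?_⟩
    rw [hX]
    simp only [List.mem_append, List.mem_singleton]
    rintro p (hp | rfl)
    · exact hl.2 p (hsplit ▸ List.mem_append_left _ hp)
    · exact hsym hvw
  have hcycY : IsCycle E (w :: (D ++ [v])) := by
    refine ⟨by simp; omega, ?_⟩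
    rw [hY]
    simp only [List.mem_append, List.mem_singleton]
    rintro p (hp | rfl)
    · exact hl.2 p (hsplit ▸ List.mem_append_right _ hp)
    · exact hvw
  simp only [numZeroEdges_eq_countP] at h1 ⊢
  rw [hsplit, List.countP_append] at h1
  -- whatever the label of the chord, one of the two halves keeps exactly one 0-edge
  obtain h | h : (X ++ [(w, v)]).countP (fun p => !χ p.1 p.2) = 1 ∨
      (Y ++ [(v, w)]).countP (fun p => !χ p.1 p.2) = 1 := by
    simp only [List.countP_append, List.countP_singleton, hχsym w v]
    cases χ v w <;>
      simp only [Bool.not_true, Bool.not_false, Bool.false_eq_true, reduceIte] <;> omega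
  · exact ⟨_, hcycX, hX ▸ h, by simp; omega⟩
  · exact ⟨_, hcycY, hY ▸ h, by simp; omega⟩

theorem exists_shorter_of_not_nodup (hsym : Symmetric E) (hχsym : ∀ i j, χ i j = χ j i)
    (htri : ∀ i j k, E i j → E j k → E k i → numZeroEdges χ [i, j, k] ≠ 1)
    {l : List ℕ} (hl : IsCycle E l) (h4 : 4 ≤ l.length) (hnd : ¬l.Nodup)
    (h1 : numZeroEdges χ l = 1) :
    ∃ l', IsCycle E l' ∧ numZeroEdges χ l' = 1 ∧ l'.length < l.length := by
  obtain ⟨A, v, B, C, rfl⟩ := List.exists_eq_append_cons_append_cons_of_not_nodup hnd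
  have hl' := hl.append_comm
  rw [← numZeroEdges_append_comm] at h1
  simp only [List.cons_append, List.append_assoc] at hl' h1
  simp only [List.length_append, List.length_cons] at h4 ⊢
  obtain ⟨l', hl'', h1', hlen⟩ :=
    exists_shorter_of_repeat hsym hχsym htri (by simp; omega) hl' h1
  exact ⟨l', hl'', h1', by simp at hlen; omega⟩

theorem exists_shorter_of_hasChord (hsym : Symmetric E) (hχsym : ∀ i j, χ i j = χ j i)
    {l : List ℕ} (hl : IsCycle E l) (hc : HasChord E l) (h1 : numZeroEdges χ l = 1) :
    ∃ l', IsCycle E l' ∧ numZeroEdges χ l' = 1 ∧ l'.length < l.length := by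
  obtain ⟨p, q, hpq, hq, hpq1, hne, hvw⟩ := hc
  rw [List.getD_eq_getElem _ _ (hpq.trans hq), List.getD_eq_getElem _ _ hq] at hvw
  obtain ⟨A, B, C, hl_eq, hA, hB⟩ := List.exists_eq_append_getElem_append_getElem hpq hq
  generalize l[p] = v, l[q] = w at hvw hl_eq
  subst hl_eq
  have hl' := hl.append_comm
  rw [← numZeroEdges_append_comm] at h1
  simp only [List.cons_append, List.append_assoc] at hl' h1
  simp only [List.length_append, List.length_cons] at hne ⊢
  have hCA : C ++ A ≠ [] := by
    intro h
    obtain ⟨rfl, rfl⟩ := List.append_eq_nil_iff.1 h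
    simp at hA hne
    omega
  obtain ⟨l', hl'', h1', hlen⟩ := exists_shorter_of_chord hsym hχsym
    (List.ne_nil_of_length_pos (by omega)) hCA hvw hl' h1
  exact ⟨l', hl'', h1', by simp at hlen; omega⟩

theorem numZeroEdges_ne_one_of_chordal (hsym : Symmetric E)
    (hchordal : ∀ l : List ℕ, IsCycle E l → l.Nodup → 4 ≤ l.length → HasChord E l)
    (hχsym : ∀ i j, χ i j = χ j i)
    (htri : ∀ i j k, E i j → E j k → E k i → numZeroEdges χ [i, j, k] ≠ 1)
    {l : List ℕ} (hl : IsCycle E l) : numZeroEdges χ l ≠ 1 := by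
  intro h1
  obtain h3 | h4 := hl.1.eq_or_lt
  · obtain ⟨a, b, c, rfl⟩ := List.length_eq_three.1 h3.symm
    obtain ⟨hab, hbc, hca⟩ := isCycle_triple.1 hl
    exact htri a b c hab hbc hca h1
  obtain ⟨l', hl', h1', hlen⟩ : ∃ l', IsCycle E l' ∧ numZeroEdges χ l' = 1 ∧ l'.length < l.length
  · by_cases hnd : l.Nodup
    · exact exists_shorter_of_hasChord hsym hχsym hl (hchordal l hl hnd h4) h1
    · exact exists_shorter_of_not_nodup hsym hχsym htri hl h4 hnd h1
  exact numZeroEdges_ne_one_of_chordal hsym hchordal hχsym htri hl' h1'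
termination_by l.length

end

theorem stmt10 (E : ℕ → ℕ → Prop) (hsym : Symmetric E)
    (hchordal : ∀ l : List ℕ, IsCycle E l → l.Nodup → 4 ≤ l.length → HasChord E l)
    (χ : ℕ → ℕ → Bool) (hχsym : ∀ i j, χ i j = χ j i) :
    (¬ ∃ l : List ℕ, IsCycle E l ∧ numZeroEdges χ l = 1) ↔
    (¬ ∃ i j k : ℕ, E i j ∧ E j k ∧ E i k ∧
        (if χ i j then 0 else 1) + (if χ j k then 0 else 1) +
          (if χ i k then 0 else 1) = 1) := by
  have hcount : ∀ i j k, numZeroEdges χ [i, j, k] =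
      (if χ i j then 0 else 1) + (if χ j k then 0 else 1) + (if χ i k then 0 else 1) :=
    fun i j k => by rw [numZeroEdges_triple, hχsym k i]
  constructor
  · rintro hcyc ⟨i, j, k, hij, hjk, hik, h1⟩
    exact hcyc ⟨[i, j, k], isCycle_triple.2 ⟨hij, hjk, hsym hik⟩, (hcount i j k).trans h1⟩
  · rintro htri ⟨l, hl, h1⟩
    refine numZeroEdges_ne_one_of_chordal hsym hchordal hχsym (fun i j k hij hjk hki h => ?_) hl h1
    exact htri ⟨i, j, k, hij, hjk, hsym hki, (hcount i j k).symm.trans h⟩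
end

section
/- Eliminating vertices one at a time from a graph, where eliminating vertex v adds edges between all pairs of remaining neighbors of v, produces a chordal graph when the added (fill-in) edges are added to the original graph. -/
/-- `fill G i` is the graph obtained from `G` after eliminating vertices
`0, 1, …, i-1` in order: eliminating vertex `i` adds an edge between every pair of
distinct still-uneliminated neighbors of `i` in the current graph. -/
def fill (G : ℕ → ℕ → Prop) : ℕ → (ℕ → ℕ → Prop)
  | 0 => G
  | (i + 1) => fun j k =>
      fill G i j k ∨ (j ≠ k ∧ i < j ∧ i < k ∧ fill G i i j ∧ fill G i i k)

lemma fill_symm (G : ℕ → ℕ → Prop) (hsym : Symmetric G) : ∀ i, Symmetric (fill G i) := by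
  intro i
  induction i with
  | zero => exact hsym
  | succ i ih =>
    rintro j k (h | ⟨hjk, hij, hik, h1, h2⟩)
    · exact Or.inl (ih h)
    · exact Or.inr ⟨hjk.symm, hik, hij, h2, h1⟩

lemma fill_dom (n : ℕ) (G : ℕ → ℕ → Prop) (hdom : ∀ i j, G i j → i < n ∧ j < n ∧ i ≠ j) :
    ∀ i j k, fill G i j k → j < n ∧ k < n ∧ j ≠ k := by
  intro i
  induction i with
  | zero => exact hdom
  | succ i ih =>
    rintro j k (h | ⟨hjk, _, _, h1, h2⟩)
    · exact ih _ _ h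
    · exact ⟨(ih _ _ h1).2.1, (ih _ _ h2).2.1, hjk⟩

lemma fill_mono (G : ℕ → ℕ → Prop) {i m : ℕ} (him : i ≤ m) {j k : ℕ}
    (h : fill G i j k) : fill G m j k := by
  induction m with
  | zero => exact (Nat.le_zero.mp him) ▸ h
  | succ m ih =>
    rcases Nat.lt_or_ge i (m+1) with hlt | hge
    · exact Or.inl (ih (Nat.lt_succ_iff.mp hlt))
    · exact (Nat.le_antisymm him hge) ▸ h

lemma fill_down (G : ℕ → ℕ → Prop) : ∀ m j k, j < m → fill G m j k → fill G j j k := by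
  intro m
  induction m with
  | zero => exact fun j k h => absurd h (Nat.not_lt_zero j)
  | succ m ih =>
    rintro j k hj (h | ⟨_, hmj, _, _, _⟩)
    · rcases Nat.lt_or_ge j m with hlt | hge
      · exact ih j k hlt h
      · exact (Nat.le_antisymm (Nat.lt_succ_iff.mp hj) hge) ▸ h
    · omega

lemma fill_key (G : ℕ → ℕ → Prop) {n j x y : ℕ} (hjx : j < x) (hjy : j < y)
    (hxy : x ≠ y) (hjn : j < n) (h1 : fill G n j x) (h2 : fill G n j y) :
    fill G n x y := by
  have h1' := fill_down G n j x hjn h1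
  have h2' := fill_down G n j y hjn h2
  exact fill_mono G hjn (Or.inr ⟨hxy, hjx, hjy, h1', h2'⟩)

lemma cyc_edge {E : ℕ → ℕ → Prop} {l : List ℕ} (h : IsCycle E l) {t : ℕ} (ht : t < l.length) :
    E (l.getD t 0) (l.getD ((t+1) % l.length) 0) := by
  have hlen : (l.rotate 1).length = l.length := l.length_rotate 1
  have htz : t < (l.zip (l.rotate 1)).length := by
    rw [List.length_zip, hlen, Nat.min_self]; exact ht
  have hmem : (l[t]'ht, (l.rotate 1)[t]'(hlen ▸ ht)) ∈ cycEdges l := by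
    have := List.getElem_zip (l := l) (l' := l.rotate 1) (i := t) (h := htz)
    rw [← this]; exact List.getElem_mem htz
  have := h.2 _ hmem
  simp only [List.getElem_rotate] at this
  rwa [List.getD_eq_getElem l 0 ht,
    List.getD_eq_getElem l 0 (Nat.mod_lt _ (by omega))]

theorem stmt11 (n : ℕ) (G : ℕ → ℕ → Prop) (hsym : Symmetric G)
    (hdom : ∀ i j, G i j → i < n ∧ j < n ∧ i ≠ j) :
    ∀ l : List ℕ, IsCycle (fill G n) l → l.Nodup → 4 ≤ l.length →
      HasChord (fill G n) l := by
  intro l hcyc hnd hlen4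
  have hlpos : 0 < l.length := by omega
  obtain ⟨t0, ht0mem, ht0min⟩ := Finset.exists_min_image (Finset.range l.length)
    (fun s => l.getD s 0) ⟨0, Finset.mem_range.mpr hlpos⟩
  rw [Finset.mem_range] at ht0mem
  have hmin : ∀ s, s < l.length → l.getD t0 0 ≤ l.getD s 0 := fun s hs =>
    ht0min s (Finset.mem_range.mpr hs)
  have hne : ∀ i j, i < l.length → j < l.length → i ≠ j → l.getD i 0 ≠ l.getD j 0 := by
    intro i j hi hj hij
    rw [List.getD_eq_getElem l 0 hi, List.getD_eq_getElem l 0 hj]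
    exact fun h => hij (hnd.getElem_inj_iff.mp h)
  have hlt : ∀ s, s < l.length → s ≠ t0 → l.getD t0 0 < l.getD s 0 := fun s hs hst =>
    lt_of_le_of_ne (hmin s hs) (hne t0 s ht0mem hs (Ne.symm hst))
  have hedge : ∀ t, t < l.length → fill G n (l.getD t 0) (l.getD ((t+1) % l.length) 0) :=
    fun t ht => cyc_edge hcyc ht
  have hsymF := fill_symm G hsym n
  have hdomF := fill_dom n G hdom n
  by_cases h0 : t0 = 0
  · -- neighbors at positions 1 and len-1
    have e0 := hedge 0 hlpos
    have eL := hedge (l.length - 1) (by omega)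
    rw [show (0+1) % l.length = 1 by rw [Nat.mod_eq_of_lt]; omega] at e0
    rw [show (l.length - 1 + 1) % l.length = 0 by rw [Nat.sub_add_cancel]; exact Nat.mod_self _; omega] at eL
    have hvx : fill G n (l.getD 0 0) (l.getD 1 0) := e0
    have hvy : fill G n (l.getD 0 0) (l.getD (l.length - 1) 0) := hsymF eL
    have hvn : l.getD 0 0 < n := (hdomF _ _ hvx).1
    refine ⟨1, l.length - 1, by omega, by omega, by omega, by omega, ?_⟩
    exact fill_key G (h0 ▸ hlt 1 (by omega) (by omega)) (h0 ▸ hlt (l.length - 1) (by omega) (by omega))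
      (hne 1 (l.length - 1) (by omega) (by omega) (by omega)) hvn hvx hvy
  · by_cases hL : t0 = l.length - 1
    · have e0 := hedge (l.length - 2) (by omega)
      have eL := hedge (l.length - 1) (by omega)
      rw [show (l.length - 2 + 1) % l.length = l.length - 1 by rw [Nat.mod_eq_of_lt] <;> omega] at e0
      rw [show (l.length - 1 + 1) % l.length = 0 by rw [Nat.sub_add_cancel]; exact Nat.mod_self _; omega] at eL
      have hvx : fill G n (l.getD (l.length - 1) 0) (l.getD (l.length - 2) 0) := hsymF e0
      have hvy : fill G n (l.getD (l.length - 1) 0) (l.getD 0 0) := eL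
      have hvn : l.getD (l.length - 1) 0 < n := (hdomF _ _ hvx).1
      refine ⟨0, l.length - 2, by omega, by omega, by omega, by omega, ?_⟩
      exact hsymF (fill_key G (hL ▸ hlt (l.length - 2) (by omega) (by omega))
        (hL ▸ hlt 0 (by omega) (by omega))
        (hne (l.length - 2) 0 (by omega) (by omega) (by omega)) hvn hvx hvy)
    · -- interior: 0 < t0 < len - 1
      have ht0b : 0 < t0 ∧ t0 < l.length - 1 := ⟨Nat.pos_of_ne_zero h0, by omega⟩
      have e0 := hedge (t0 - 1) (by omega)
      have e1 := hedge t0 ht0mem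
      rw [show (t0 - 1 + 1) % l.length = t0 by rw [Nat.sub_add_cancel]; exact Nat.mod_eq_of_lt ht0mem; omega] at e0
      rw [show (t0 + 1) % l.length = t0 + 1 by rw [Nat.mod_eq_of_lt]; omega] at e1
      have hvx : fill G n (l.getD t0 0) (l.getD (t0 - 1) 0) := hsymF e0
      have hvn : l.getD t0 0 < n := (hdomF _ _ hvx).1
      refine ⟨t0 - 1, t0 + 1, by omega, by omega, by omega, by omega, ?_⟩
      exact fill_key G (hlt (t0 - 1) (by omega) (by omega)) (hlt (t0 + 1) (by omega) (by omega))
        (hne (t0 - 1) (t0 + 1) (by omega) (by omega) (by omega)) hvn hvx e1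
end

section
/- For any partition of the edges of the n×n mesh M_n into two sets A and B of equal size n(n-1) each, the number of split faces (unit faces having at least one border edge in A and at least one in B) is at least (n-3)/2. -/
/-!
Group the unit faces into the `n - 1` rows of faces. Adjacent faces share an edge and a type A
face cannot share an edge with a type B face, so a row without split faces is entirely of type A
or entirely of type B. If there is a row of each kind, then every column of faces joins a type A
face to a type B face and so contains a split face: at least `n - 1` split faces. Otherwise all
unsplit rows have the same type, say A. Such a row owns `2n - 1` edges of A (its `n` vertical
edges and the `n - 1` edges along its top), disjoint from those of any other row, so
`|A| = n(n - 1)` allows at most `(n + 1)/2` of them, and each of the remaining `≥ (n - 3)/2` rows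
contains a split face.
-/

/-- The edge set of the `n × n` mesh graph `M_n` on the vertices
`{0,…,n-1} × {0,…,n-1}` (edges join vertices at `L¹`-distance 1). -/
def meshEdges (n : ℕ) : Set (Sym2 (ℕ × ℕ)) :=
  {e | ∃ a b : ℕ × ℕ, a.1 < n ∧ a.2 < n ∧ b.1 < n ∧ b.2 < n ∧
        ((a.1 : ℤ) - (b.1 : ℤ)).natAbs + ((a.2 : ℤ) - (b.2 : ℤ)).natAbs = 1 ∧
        e = s(a, b)}

/-- The four border edges of the unit face `F_{i,j}` of the mesh. -/
def faceBorder (i j : ℕ) : Set (Sym2 (ℕ × ℕ)) :=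
  {s((i, j), (i, j + 1)), s((i, j), (i + 1, j)),
   s((i, j + 1), (i + 1, j + 1)), s((i + 1, j), (i + 1, j + 1))}

/-- The unit face `F_{i,j}` is split with respect to the edge partition `(A, B)`:
it has at least one border edge in `A` and at least one in `B`. -/
def SplitFace (A B : Set (Sym2 (ℕ × ℕ))) (i j : ℕ) : Prop :=
  (faceBorder i j ∩ A).Nonempty ∧ (faceBorder i j ∩ B).Nonempty

section Chain

variable {α : Type*} {C D : Set α} {F : ℕ → Set α} {m : ℕ}

theorem forall_subset_of_chain (hCD : Disjoint C D) (hF : ∀ t < m, F t ⊆ C ∨ F t ⊆ D)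
    (hlink : ∀ t, t + 1 < m → (F t ∩ F (t + 1)).Nonempty) (h0 : F 0 ⊆ C) :
    ∀ t < m, F t ⊆ C := by
  intro t ht
  induction t with
  | zero => exact h0
  | succ t ih =>
    refine (hF (t + 1) ht).resolve_right fun hD => ?_
    obtain ⟨e, he, he'⟩ := hlink t ht
    exact Set.disjoint_left.mp hCD (ih (by omega) he) (hD he')

theorem chain_subset_or_subset (hCD : Disjoint C D) (hF : ∀ t < m, F t ⊆ C ∨ F t ⊆ D)
    (hlink : ∀ t, t + 1 < m → (F t ∩ F (t + 1)).Nonempty) :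
    (∀ t < m, F t ⊆ C) ∨ (∀ t < m, F t ⊆ D) := by
  rcases Nat.eq_zero_or_pos m with rfl | hm
  · simp
  rcases hF 0 hm with h0 | h0
  · exact .inl (forall_subset_of_chain hCD hF hlink h0)
  · exact .inr (forall_subset_of_chain hCD.symm (fun t ht => (hF t ht).symm) hlink h0)

end Chain

theorem subset_or_subset_of_subset_union {α : Type*} {s A B : Set α} (h : s ⊆ A ∪ B)
    (hs : ¬ ((s ∩ A).Nonempty ∧ (s ∩ B).Nonempty)) : s ⊆ A ∨ s ⊆ B := by
  by_contra hAB
  rw [not_or, Set.not_subset, Set.not_subset] at hAB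
  obtain ⟨⟨x, hxs, hxA⟩, ⟨y, hys, hyB⟩⟩ := hAB
  exact hs ⟨⟨y, hys, (h hys).resolve_right hyB⟩, ⟨x, hxs, (h hxs).resolve_left hxA⟩⟩

theorem meshEdges_finite (n : ℕ) : (meshEdges n).Finite := by
  have hV : (Set.Iio n ×ˢ Set.Iio n : Set (ℕ × ℕ)).Finite :=
    (Set.finite_Iio n).prod (Set.finite_Iio n)
  refine ((hV.prod hV).image fun p : (ℕ × ℕ) × (ℕ × ℕ) => s(p.1, p.2)).subset ?_
  rintro _ ⟨a, b, ha₁, ha₂, hb₁, hb₂, -, rfl⟩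
  exact ⟨(a, b), ⟨⟨ha₁, ha₂⟩, hb₁, hb₂⟩, rfl⟩

theorem faceBorder_subset_meshEdges {n i j : ℕ} (hi : i < n - 1) (hj : j < n - 1) :
    faceBorder i j ⊆ meshEdges n := by
  intro e he
  simp only [faceBorder, Set.mem_insert_iff, Set.mem_singleton_iff] at he
  rcases he with rfl | rfl | rfl | rfl
  · exact ⟨(i, j), (i, j + 1), by omega, by omega, by omega, by omega, by simp, rfl⟩
  · exact ⟨(i, j), (i + 1, j), by omega, by omega, by omega, by omega, by simp, rfl⟩
  · exact ⟨(i, j + 1), (i + 1, j + 1), by omega, by omega, by omega, by omega, by simp, rfl⟩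
  · exact ⟨(i + 1, j), (i + 1, j + 1), by omega, by omega, by omega, by omega, by simp, rfl⟩

theorem faceBorder_nonempty (i j : ℕ) : (faceBorder i j).Nonempty :=
  ⟨_, Set.mem_insert _ _⟩

theorem faceBorder_inter_succ_left_nonempty (i j : ℕ) :
    (faceBorder i j ∩ faceBorder (i + 1) j).Nonempty :=
  ⟨s((i + 1, j), (i + 1, j + 1)), by simp [faceBorder]⟩

theorem faceBorder_inter_succ_right_nonempty (i j : ℕ) :
    (faceBorder i j ∩ faceBorder i (j + 1)).Nonempty :=
  ⟨s((i, j + 1), (i + 1, j + 1)), by simp [faceBorder]⟩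

def MonoRow (n : ℕ) (C : Set (Sym2 (ℕ × ℕ))) (j : ℕ) : Prop :=
  ∀ i < n - 1, faceBorder i j ⊆ C

section Mesh

variable {n : ℕ} {A B : Set (Sym2 (ℕ × ℕ))}

theorem subset_or_subset_of_not_splitFace (hU : A ∪ B = meshEdges n) {i j : ℕ}
    (hi : i < n - 1) (hj : j < n - 1) (h : ¬ SplitFace A B i j) :
    faceBorder i j ⊆ A ∨ faceBorder i j ⊆ B :=
  subset_or_subset_of_subset_union (hU ▸ faceBorder_subset_meshEdges hi hj) h

theorem monoRow_or_monoRow (hU : A ∪ B = meshEdges n) (hdisj : Disjoint A B) {j : ℕ}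
    (hj : j < n - 1) (h : ∀ i < n - 1, ¬ SplitFace A B i j) :
    MonoRow n A j ∨ MonoRow n B j :=
  chain_subset_or_subset hdisj
    (fun i hi => subset_or_subset_of_not_splitFace hU hi hj (h i hi))
    (fun i _ => faceBorder_inter_succ_left_nonempty i j)

theorem exists_splitFace_of_monoRow (hU : A ∪ B = meshEdges n) (hdisj : Disjoint A B)
    {j j' : ℕ} (hj : j < n - 1) (hj' : j' < n - 1) (hA : MonoRow n A j) (hB : MonoRow n B j')
    {i : ℕ} (hi : i < n - 1) : ∃ t < n - 1, SplitFace A B i t := by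
  by_contra! h
  rcases chain_subset_or_subset (F := faceBorder i) hdisj
      (fun t ht => subset_or_subset_of_not_splitFace hU hi ht (h t ht))
      (fun t _ => faceBorder_inter_succ_right_nonempty i t) with hcol | hcol
  · obtain ⟨e, he⟩ := faceBorder_nonempty i j'
    exact Set.disjoint_left.mp hdisj (hcol j' hj' he) (hB i hi he)
  · obtain ⟨e, he⟩ := faceBorder_nonempty i j
    exact Set.disjoint_left.mp hdisj (hA i hi he) (hcol j hj he)

end Mesh

def stripEdges (n j : ℕ) : Finset (Sym2 (ℕ × ℕ)) :=
  (Finset.range n).image (fun i => s((i, j), (i, j + 1))) ∪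
    (Finset.range (n - 1)).image (fun i => s((i, j + 1), (i + 1, j + 1)))

theorem card_stripEdges (n j : ℕ) : (stripEdges n j).card = n + (n - 1) := by
  rw [stripEdges, Finset.card_union_of_disjoint, Finset.card_image_of_injective,
    Finset.card_image_of_injective, Finset.card_range, Finset.card_range]
  · intro a b h
    simp only [Sym2.eq_iff, Prod.mk.injEq] at h
    omega
  · intro a b h
    simp only [Sym2.eq_iff, Prod.mk.injEq] at h
    omega
  · simp only [Finset.disjoint_left, Finset.mem_image, Finset.mem_range]
    rintro _ ⟨a, -, rfl⟩ ⟨b, -, h⟩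
    simp only [Sym2.eq_iff, Prod.mk.injEq] at h
    omega

theorem disjoint_stripEdges (n : ℕ) {j j' : ℕ} (h : j ≠ j') :
    Disjoint (stripEdges n j) (stripEdges n j') := by
  simp only [Finset.disjoint_left, stripEdges, Finset.mem_union, Finset.mem_image,
    Finset.mem_range]
  rintro _ (⟨a, -, rfl⟩ | ⟨a, -, rfl⟩) (⟨b, -, hb⟩ | ⟨b, -, hb⟩) <;>
    (simp only [Sym2.eq_iff, Prod.mk.injEq] at hb; omega)

theorem coe_stripEdges_subset {n j : ℕ} {C : Set (Sym2 (ℕ × ℕ))} (hj : j < n - 1)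
    (hC : MonoRow n C j) : ↑(stripEdges n j) ⊆ C := by
  intro e he
  simp only [stripEdges, Finset.coe_union, Finset.coe_image, Set.mem_union, Set.mem_image,
    Finset.mem_coe, Finset.mem_range] at he
  rcases he with ⟨i, hi, rfl⟩ | ⟨i, hi, rfl⟩
  · rcases Nat.lt_or_ge i (n - 1) with hi' | hi'
    · exact hC i hi' (by simp [faceBorder])
    · obtain rfl : i = n - 2 + 1 := by omega
      exact hC (n - 2) (by omega) (by simp [faceBorder])
  · exact hC i hi (by simp [faceBorder])

section Counting

open Classical

variable {n : ℕ} {A B : Set (Sym2 (ℕ × ℕ))}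

noncomputable def splitFaces (n : ℕ) (A B : Set (Sym2 (ℕ × ℕ))) : Finset (ℕ × ℕ) :=
  (Finset.range (n - 1) ×ˢ Finset.range (n - 1)).filter fun p => SplitFace A B p.1 p.2

noncomputable def splitRows (n : ℕ) (A B : Set (Sym2 (ℕ × ℕ))) : Finset ℕ :=
  (Finset.range (n - 1)).filter fun j => ∃ i < n - 1, SplitFace A B i j

noncomputable def monoRows (n : ℕ) (C : Set (Sym2 (ℕ × ℕ))) : Finset ℕ :=
  (Finset.range (n - 1)).filter (MonoRow n C)

theorem ncard_setOf_splitFace :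
    {p : ℕ × ℕ | p.1 < n - 1 ∧ p.2 < n - 1 ∧ SplitFace A B p.1 p.2}.ncard =
      (splitFaces n A B).card := by
  rw [← Set.ncard_coe_finset]
  congr
  ext p
  simp [splitFaces, and_assoc]

theorem card_splitRows_le_card_splitFaces : (splitRows n A B).card ≤ (splitFaces n A B).card := by
  refine (Finset.card_le_card ?_).trans (Finset.card_image_le (f := Prod.snd))
  intro j hj
  simp only [splitRows, Finset.mem_filter, Finset.mem_range] at hj
  obtain ⟨hj, i, hi, hsplit⟩ := hj
  exact Finset.mem_image.mpr ⟨(i, j), by simp [splitFaces, hi, hj, hsplit], rfl⟩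

theorem sub_one_le_card_splitFaces (hU : A ∪ B = meshEdges n) (hdisj : Disjoint A B)
    {j j' : ℕ} (hj : j ∈ monoRows n A) (hj' : j' ∈ monoRows n B) :
    n - 1 ≤ (splitFaces n A B).card := by
  simp only [monoRows, Finset.mem_filter, Finset.mem_range] at hj hj'
  rw [← Finset.card_range (n - 1)]
  refine (Finset.card_le_card ?_).trans (Finset.card_image_le (f := Prod.fst))
  intro i hi
  rw [Finset.mem_range] at hi
  obtain ⟨t, ht, hsplit⟩ := exists_splitFace_of_monoRow hU hdisj hj.1 hj'.1 hj.2 hj'.2 hi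
  exact Finset.mem_image.mpr ⟨(i, t), by simp [splitFaces, hi, ht, hsplit], rfl⟩

theorem sub_one_le_card_splitRows_add (hU : A ∪ B = meshEdges n) (hdisj : Disjoint A B) :
    n - 1 ≤ (splitRows n A B).card + (monoRows n A).card + (monoRows n B).card := by
  have hcover : Finset.range (n - 1) ⊆ splitRows n A B ∪ monoRows n A ∪ monoRows n B := by
    intro j hj
    by_cases hsplit : ∃ i < n - 1, SplitFace A B i j
    · simp [splitRows, hj, hsplit]
    · push Not at hsplit
      rw [Finset.mem_range] at hj
      rcases monoRow_or_monoRow hU hdisj hj hsplit with h | h <;> simp [monoRows, hj, h]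
  calc n - 1 = (Finset.range (n - 1)).card := (Finset.card_range _).symm
    _ ≤ _ := Finset.card_le_card hcover
    _ ≤ _ := Finset.card_union_le _ _
    _ ≤ _ := by grw [Finset.card_union_le]

theorem card_monoRows_mul_le {C : Set (Sym2 (ℕ × ℕ))} (hC : C.Finite) :
    (monoRows n C).card * (n + (n - 1)) ≤ C.ncard := by
  have hsub : ↑((monoRows n C).biUnion (stripEdges n)) ⊆ C := by
    simp only [Finset.coe_biUnion, Set.iUnion_subset_iff]
    intro j hj
    simp only [monoRows, Finset.coe_filter, Finset.mem_range, Set.mem_ofPred_eq] at hj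
    exact coe_stripEdges_subset hj.1 hj.2
  calc (monoRows n C).card * (n + (n - 1))
      = ((monoRows n C).biUnion (stripEdges n)).card := by
        rw [Finset.card_biUnion fun j _ j' _ h => disjoint_stripEdges n h]
        simp [card_stripEdges]
    _ ≤ C.ncard := by
        rw [← Set.ncard_coe_finset]
        exact Set.ncard_le_ncard hsub hC

end Counting

theorem le_two_mul_add_three {n s k : ℕ} (hs : n - 1 ≤ s + k)
    (hk : k * (n + (n - 1)) ≤ n * (n - 1)) : n ≤ 2 * s + 3 := by
  obtain _ | m := n
  · omega
  have hk' : k * (2 * m + 1) ≤ (m + 1) * m := by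
    simpa [show m + 1 + m = 2 * m + 1 by omega] using hk
  have : 2 * k ≤ m + 1 := by nlinarith
  omega

theorem stmt15 (n : ℕ) (A B : Set (Sym2 (ℕ × ℕ)))
    (hU : A ∪ B = meshEdges n) (hdisj : Disjoint A B)
    (hA : A.ncard = n * (n - 1)) (hB : B.ncard = n * (n - 1)) :
    ((n : ℝ) - 3) / 2 ≤
      ({p : ℕ × ℕ | p.1 < n - 1 ∧ p.2 < n - 1 ∧ SplitFace A B p.1 p.2}.ncard : ℝ) := by
  suffices h : n ≤ 2 * (splitFaces n A B).card + 3 by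
    rw [ncard_setOf_splitFace]
    have h' : (n : ℝ) ≤ 2 * (splitFaces n A B).card + 3 := by exact_mod_cast h
    linarith
  have hmesh := meshEdges_finite n
  have hboundA := hA ▸ card_monoRows_mul_le (n := n) (hmesh.subset (hU ▸ Set.subset_union_left))
  have hboundB := hB ▸ card_monoRows_mul_le (n := n) (hmesh.subset (hU ▸ Set.subset_union_right))
  have hrows := sub_one_le_card_splitRows_add hU hdisj
  have hsplit := card_splitRows_le_card_splitFaces (n := n) (A := A) (B := B)
  by_cases hboth : (monoRows n A).Nonempty ∧ (monoRows n B).Nonempty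
  · obtain ⟨⟨j, hj⟩, ⟨j', hj'⟩⟩ := hboth
    have := sub_one_le_card_splitFaces hU hdisj hj hj'
    omega
  · rw [not_and_or, Finset.not_nonempty_iff_eq_empty, Finset.not_nonempty_iff_eq_empty] at hboth
    rcases hboth with hnoA | hnoB
    · have := le_two_mul_add_three (by simpa [hnoA] using hrows) hboundB
      omega
    · have := le_two_mul_add_three (by simpa [hnoB] using hrows) hboundA
      omega
end

section
/- If a Boolean function F over variables V admits a fooling set of size 2^k with respect to a partition of its variables into a first half A and second half B under a given variable ordering, then any OBDD for F under that ordering has at least 2^k nodes. Applying this with the (n-3)/4 edge-independent split faces construction shows that any OBDD representation of the transitivity-constraint function F_trans(E_{n×n}) of the n×n mesh requires Ω(2^{n/4}) nodes under every variable ordering. -/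
/-- An Ordered Binary Decision Diagram over the Boolean variables `x_0 < x_1 < ⋯ <
x_{m-1}` (the variable ordering is the order of the indices).  It has `size` internal
(branching) nodes plus the two terminal nodes `0` and `1` (represented by `Sum.inr`);
along every edge the tested variable index strictly increases. -/
structure OBDD (m : ℕ) where
  size : ℕ
  root : Fin size ⊕ Bool
  var : Fin size → Fin m
  lo : Fin size → Fin size ⊕ Bool
  hi : Fin size → Fin size ⊕ Bool
  ordered : ∀ u v : Fin size,
    (lo u = Sum.inl v ∨ hi u = Sum.inl v) → var u < var v

/-- Fuelled evaluation of an OBDD from a given node under assignment `χ`. -/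
def OBDD.evalAux {m : ℕ} (D : OBDD m) (χ : Fin m → Bool) :
    ℕ → (Fin D.size ⊕ Bool) → Bool
  | 0, _ => false
  | _ + 1, Sum.inr b => b
  | fuel + 1, Sum.inl u =>
      D.evalAux χ fuel (if χ (D.var u) then D.hi u else D.lo u)

/-- The Boolean function computed by an OBDD (fuel `m + 1` always suffices since the
variable index strictly increases along every path). -/
def OBDD.eval {m : ℕ} (D : OBDD m) (χ : Fin m → Bool) : Bool :=
  D.evalAux χ (m + 1) D.root

/-- The number of nodes of an OBDD, including the two terminal nodes. -/
def OBDD.numNodes {m : ℕ} (D : OBDD m) : ℕ := D.size + 2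

/-- The `n × n` planar mesh graph `M_n`. -/
def mesh (n : ℕ) : SimpleGraph (Fin n × Fin n) where
  Adj a b := ((a.1 : ℤ) - (b.1 : ℤ)).natAbs + ((a.2 : ℤ) - (b.2 : ℤ)).natAbs = 1
  symm := ⟨by intro a b h; omega⟩
  loopless := ⟨by intro a h; omega⟩

/-- Given an ordering `σ` identifying the Boolean variables `Fin m` with the edges of
the mesh `M_n`, the label that the assignment `χ` gives to the unordered pair `e`
(edges not in the mesh get an irrelevant default label). -/
noncomputable def edgeLabel {n m : ℕ} (σ : Fin m ≃ (mesh n).edgeSet)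
    (χ : Fin m → Bool) (e : Sym2 (Fin n × Fin n)) : Bool :=
  open scoped Classical in
  if h : e ∈ (mesh n).edgeSet then χ (σ.symm ⟨e, h⟩) else false

/-- `l` is the vertex list of a cycle of the mesh `M_n` (successive vertices, and the
last and first vertex, are adjacent). -/
def IsMeshCycle (n : ℕ) (l : List (Fin n × Fin n)) : Prop :=
  3 ≤ l.length ∧ ∀ p ∈ l.zip (l.rotate 1), (mesh n).Adj p.1 p.2

/-- The transitivity-constraint function `F_trans(E_{n×n})` of the mesh, as a function
of an assignment `χ` to the edge variables `Fin m` (via the ordering `σ`): it holds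
iff no cycle of the mesh has exactly one 0-edge. -/
def MeshTransHolds (n m : ℕ) (σ : Fin m ≃ (mesh n).edgeSet)
    (χ : Fin m → Bool) : Prop :=
  ¬ ∃ l : List (Fin n × Fin n), IsMeshCycle n l ∧
      ((l.zip (l.rotate 1)).filter
        (fun p => !edgeLabel σ χ (s(p.1, p.2)))).length = 1

/-!
An OBDD reads its variables in index order, so its value is determined by the node at which the
path first tests a variable `≥ h` together with the variables from `h` on. For a fooling set the
diagonal assignments `α_y · β_y` therefore reach pairwise distinct such nodes.

For the mesh `M_{n+1}`, take the `⌊n/2⌋` even-numbered rows of faces and cut the variable order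
just before the first of them is read completely. Either every such row then has a side on each
side of the cut, or some row lies entirely after it, and then every even-numbered column of faces
crosses both that row and the completed one. Consecutive faces of a row or column share a
side, so each of these rows, respectively columns, contains a face split by the cut, and these
`⌊n/2⌋` faces are pairwise vertex-disjoint. Giving the two chosen sides of face `i` the value
`y i`, its other sides `1` and all other edges `0` yields a fooling set: off the diagonal some
face has exactly one `0`-side, while on the diagonal a potential that is constant exactly along
the `1`-edges rules out a cycle with exactly one `0`-edge.
-/

def splice {m : ℕ} (h : ℕ) (χ χ' : Fin m → Bool) : Fin m → Bool :=
  fun i => if (i : ℕ) < h then χ i else χ' i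

namespace OBDD

variable {m : ℕ} (D : OBDD m)

def next (χ : Fin m → Bool) (u : Fin D.size) : Fin D.size ⊕ Bool :=
  if χ (D.var u) then D.hi u else D.lo u

/-- Bounds the length of every path from a node, since variable indices increase along it. -/
def height : Fin D.size ⊕ Bool → ℕ
  | Sum.inl u => m - D.var u
  | Sum.inr _ => 0

theorem evalAux_succ_inl (χ : Fin m → Bool) (f : ℕ) (u : Fin D.size) :
    D.evalAux χ (f + 1) (Sum.inl u) = D.evalAux χ f (D.next χ u) := rfl

theorem var_lt_of_next_eq {χ : Fin m → Bool} {u v : Fin D.size}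
    (h : D.next χ u = Sum.inl v) : D.var u < D.var v := by
  unfold next at h
  split at h
  · exact D.ordered u v (Or.inr h)
  · exact D.ordered u v (Or.inl h)

theorem height_next_lt (χ : Fin m → Bool) (u : Fin D.size) :
    D.height (D.next χ u) < D.height (Sum.inl u) := by
  have := (D.var u).isLt
  rcases hv : D.next χ u with v | b
  · have := D.var_lt_of_next_eq hv
    simp only [height]
    omega
  · simp only [height]
    omega

theorem height_lt_succ (s : Fin D.size ⊕ Bool) : D.height s < m + 1 := by
  rcases s with u | b <;> simp only [height] <;> omega

theorem evalAux_eq_of_height_lt (χ : Fin m → Bool) {f f' : ℕ} {s : Fin D.size ⊕ Bool}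
    (hf : D.height s < f) (hf' : D.height s < f') :
    D.evalAux χ f s = D.evalAux χ f' s := by
  induction f generalizing f' s with
  | zero => omega
  | succ f ih =>
    obtain _ | f' := f'
    · omega
    rcases s with u | b
    · have := D.height_next_lt χ u
      rw [evalAux_succ_inl, evalAux_succ_inl]
      exact ih (by omega) (by omega)
    · rfl

def cutAux (h : ℕ) (χ : Fin m → Bool) : ℕ → Fin D.size ⊕ Bool → Fin D.size ⊕ Bool
  | 0, s => s
  | _ + 1, Sum.inr b => Sum.inr b
  | f + 1, Sum.inl u =>
      if (D.var u : ℕ) < h then cutAux h χ f (D.next χ u) else Sum.inl u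

/-- The node at which the path of `χ` from the root first tests a variable `≥ h`. -/
def cutNode (h : ℕ) (χ : Fin m → Bool) : Fin D.size ⊕ Bool :=
  D.cutAux h χ (m + 1) D.root

theorem height_cutAux_le (h : ℕ) (χ : Fin m → Bool) (f : ℕ) (s : Fin D.size ⊕ Bool) :
    D.height (D.cutAux h χ f s) ≤ D.height s := by
  induction f generalizing s with
  | zero => exact le_rfl
  | succ f ih =>
    rcases s with u | b
    · simp only [cutAux]
      split
      · exact (ih _).trans (D.height_next_lt χ u).le
      · exact le_rfl
    · exact le_rfl

theorem cutAux_congr (h : ℕ) {χ χ' : Fin m → Bool}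
    (hχ : ∀ i : Fin m, (i : ℕ) < h → χ i = χ' i)
    (f : ℕ) (s : Fin D.size ⊕ Bool) : D.cutAux h χ f s = D.cutAux h χ' f s := by
  induction f generalizing s with
  | zero => rfl
  | succ f ih =>
    rcases s with u | b
    · simp only [cutAux]
      split_ifs with hlt
      · rw [next, next, hχ _ hlt]
        exact ih _
      · rfl
    · rfl

theorem le_var_of_cutAux_eq (h : ℕ) (χ : Fin m → Bool) {f : ℕ} {s : Fin D.size ⊕ Bool}
    (hf : D.height s < f) {u : Fin D.size} (hu : D.cutAux h χ f s = Sum.inl u) :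
    h ≤ D.var u := by
  induction f generalizing s with
  | zero => omega
  | succ f ih =>
    rcases s with v | b
    · simp only [cutAux] at hu
      split at hu
      · exact ih (by have := D.height_next_lt χ v; omega) hu
      · cases hu
        omega
    · cases hu

theorem evalAux_cutAux (h : ℕ) (χ : Fin m → Bool) {f : ℕ} {s : Fin D.size ⊕ Bool}
    (hf : D.height s < f) : D.evalAux χ f s = D.evalAux χ f (D.cutAux h χ f s) := by
  induction f generalizing s with
  | zero => omega
  | succ f ih =>
    rcases s with u | b
    · simp only [cutAux]
      split
      · have hnext : D.height (D.next χ u) < f := by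
          have := D.height_next_lt χ u; omega
        rw [evalAux_succ_inl, ih hnext]
        have := D.height_cutAux_le h χ f (D.next χ u)
        exact D.evalAux_eq_of_height_lt χ (by omega) (by omega)
      · rfl
    · rfl

theorem evalAux_congr (h : ℕ) {χ χ' : Fin m → Bool}
    (hχ : ∀ i : Fin m, h ≤ (i : ℕ) → χ i = χ' i)
    (f : ℕ) {s : Fin D.size ⊕ Bool} (hs : ∀ u, s = Sum.inl u → h ≤ D.var u) :
    D.evalAux χ f s = D.evalAux χ' f s := by
  induction f generalizing s with
  | zero => rfl
  | succ f ih =>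
    rcases s with u | b
    · have hu := hs u rfl
      rw [evalAux_succ_inl, evalAux_succ_inl, next, next, hχ _ hu]
      refine ih fun v hv => hu.trans (D.var_lt_of_next_eq (χ := χ') ?_).le
      rw [next, ← hv]
    · rfl

theorem cutNode_congr (h : ℕ) {χ χ' : Fin m → Bool}
    (hχ : ∀ i : Fin m, (i : ℕ) < h → χ i = χ' i) :
    D.cutNode h χ = D.cutNode h χ' :=
  D.cutAux_congr h hχ _ _

theorem eval_eq_of_cutNode_eq (h : ℕ) {χ χ' : Fin m → Bool}
    (hcut : D.cutNode h χ = D.cutNode h χ')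
    (hχ : ∀ i : Fin m, h ≤ (i : ℕ) → χ i = χ' i) :
    D.eval χ = D.eval χ' := by
  have hroot := D.height_lt_succ D.root
  rw [eval, eval, D.evalAux_cutAux h χ hroot, D.evalAux_cutAux h χ' hroot]
  rw [← cutNode, ← cutNode, ← hcut]
  exact D.evalAux_congr h hχ _ fun u hu => D.le_var_of_cutAux_eq h χ hroot hu

theorem card_le_numNodes_of_fooling {ι : Type*} [Fintype ι] (h : ℕ)
    (a b : ι → Fin m → Bool)
    (hdiag : ∀ y, D.eval (splice h (a y) (b y)) = true)
    (hoff : ∀ y z, y ≠ z → D.eval (splice h (a y) (b z)) = false) :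
    Fintype.card ι ≤ D.numNodes := by
  have hcut : ∀ y z, D.cutNode h (splice h (a y) (b z)) = D.cutNode h (splice h (a y) (b y)) :=
    fun y z => D.cutNode_congr h fun i hi => by simp only [splice, if_pos hi]
  have hinj : Function.Injective fun y => D.cutNode h (splice h (a y) (b y)) := by
    intro y z hyz
    by_contra hne
    have := D.eval_eq_of_cutNode_eq h (χ := splice h (a y) (b z)) (χ' := splice h (a z) (b z))
      ((hcut y z).trans hyz) fun i hi => by simp only [splice, if_neg (not_lt.2 hi)]
    rw [hoff y z hne, hdiag z] at this
    exact Bool.false_ne_true this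
  simpa [numNodes, Fintype.card_sum] using Fintype.card_le_of_injective _ hinj

end OBDD

theorem List.length_filter_zip_rotate_ne_one {α β : Type*} [DecidableEq β] (l : List α)
    (Φ : α → β) : ((l.zip (l.rotate 1)).filter fun p => Φ p.1 ≠ Φ p.2).length ≠ 1 := by
  set L := l.zip (l.rotate 1)
  set P : α × α → Bool := fun p => Φ p.1 ≠ Φ p.2
  intro hone
  obtain ⟨p, hp⟩ := List.length_eq_one_iff.1 hone
  have hchange : Φ p.1 ≠ Φ p.2 := by
    have hmem : p ∈ L.filter P := by rw [hp]; exact List.mem_singleton_self p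
    simpa [P] using (List.mem_filter.1 hmem).2
  -- the values at the heads and at the tails of the steps of a closed walk agree as multisets
  have hperm : (L.map (Φ ∘ Prod.snd)).Perm (L.map (Φ ∘ Prod.fst)) := by
    rw [← List.map_map, ← List.map_map, List.map_snd_zip (by simp), List.map_fst_zip (by simp)]
    exact (l.rotate_perm 1).map Φ
  have hsplit (g : α × α → β) :
      ((L.filter P).map g ++ (L.filter fun p => !P p).map g).Perm (L.map g) := by
    rw [← List.map_append]
    exact (List.filter_append_perm P L).map g
  have hsame : (L.filter fun p => !P p).map (Φ ∘ Prod.snd)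
      = (L.filter fun p => !P p).map (Φ ∘ Prod.fst) :=
    List.map_congr_left fun q hq => by simpa [P, eq_comm] using (List.mem_filter.1 hq).2
  have h := ((hsplit _).trans hperm).trans (hsplit _).symm
  rw [hp, hsame, List.perm_append_right_iff] at h
  exact hchange (List.singleton_perm_singleton.1 h).symm

theorem meshTransHolds_of_potential {n m : ℕ} {σ : Fin m ≃ (mesh n).edgeSet}
    {χ : Fin m → Bool} {β : Type*} (Φ : Fin n × Fin n → β)
    (hΦ : ∀ a b, (mesh n).Adj a b → (Φ a = Φ b ↔ edgeLabel σ χ s(a, b) = true)) :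
    MeshTransHolds n m σ χ := by
  classical
  rintro ⟨l, ⟨-, hadj⟩, hone⟩
  refine l.length_filter_zip_rotate_ne_one Φ (Eq.trans ?_ hone)
  congr 1
  refine List.filter_congr fun p hp => ?_
  simp [hΦ _ _ (hadj p hp)]

theorem exists_straddle_of_chain {N : ℕ} {ι : Type*} (v : Fin N → ι → ℕ) (h : ℕ)
    (hshare : ∀ (c : ℕ) (hc : c + 1 < N),
      ∃ j j', v ⟨c, by omega⟩ j = v ⟨c + 1, hc⟩ j')
    (hlow : ∃ c j, v c j < h) (hhigh : ∃ c j, h ≤ v c j) :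
    ∃ c j j', v c j < h ∧ h ≤ v c j' := by
  by_contra hsplit
  push Not at hsplit
  obtain ⟨c₁, j₁, h₁⟩ := hlow
  obtain ⟨c₂, j₂, h₂⟩ := hhigh
  have hconst : ∀ c (hc : c < N),
      (∃ j, v ⟨c, hc⟩ j < h) ↔ ∃ j, v ⟨0, by omega⟩ j < h := by
    intro c
    induction c with
    | zero => simp
    | succ c ih =>
      intro hc
      obtain ⟨j, j', hj⟩ := hshare c hc
      rw [← ih (by omega)]
      exact ⟨fun ⟨i, hi⟩ => ⟨j, hj ▸ hsplit _ i j' hi⟩,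
        fun ⟨i, hi⟩ => ⟨j', hj.symm ▸ hsplit _ i j hi⟩⟩
  obtain ⟨j, hj⟩ := (hconst c₂ c₂.2).2 ((hconst c₁ c₁.2).1 ⟨j₁, h₁⟩)
  exact (hsplit c₂ j j₂ hj).not_ge h₂

section Faces

variable {n : ℕ}

/- Faces of `M_{n+1}` are indexed by their top-left corners in `Fin n × Fin n`. -/

def corner (f : Fin n × Fin n) (p : Bool × Bool) : Fin (n + 1) × Fin (n + 1) :=
  (⟨f.1 + p.1.toNat, by have := f.1.isLt; have := p.1.toNat_le; omega⟩,
   ⟨f.2 + p.2.toNat, by have := f.2.isLt; have := p.2.toNat_le; omega⟩)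

/-- Clockwise: top, right, bottom, left. -/
def squareEdge : Fin 4 → Sym2 (Bool × Bool) :=
  ![s((false, false), (false, true)), s((false, true), (true, true)),
    s((true, true), (true, false)), s((true, false), (false, false))]

theorem exists_squareEdge_iff (p q : Bool × Bool) :
    (∃ j, squareEdge j = s(p, q)) ↔
      (((p.1.toNat : ℤ) - q.1.toNat).natAbs + ((p.2.toNat : ℤ) - q.2.toNat).natAbs = 1) := by
  revert p q; decide

theorem exists_squareCut : ∀ {c c' : Fin 4}, c ≠ c' → ∃ φ : Bool × Bool → Bool,
    ∀ j p q, squareEdge j = s(p, q) → (φ p = φ q ↔ j ≠ c ∧ j ≠ c') := by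
  decide

theorem length_filter_square_eq_one : ∀ {c c' : Fin 4}, c ≠ c' → ∀ {u v : Bool}, u ≠ v →
    (([0, 1, 2, 3] : List (Fin 4)).filter fun j =>
      !(if j = c then u else if j = c' then v else true)).length = 1 := by
  decide

theorem mesh_adj_corner_iff (f : Fin n × Fin n) (p q : Bool × Bool) :
    (mesh (n + 1)).Adj (corner f p) (corner f q) ↔ ∃ j, squareEdge j = s(p, q) := by
  rw [exists_squareEdge_iff]
  show (((f.1 + p.1.toNat : ℕ) : ℤ) - (f.1 + q.1.toNat : ℕ)).natAbs
    + (((f.2 + p.2.toNat : ℕ) : ℤ) - (f.2 + q.2.toNat : ℕ)).natAbs = 1 ↔ _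
  push_cast
  simp only [add_sub_add_left_eq_sub]

theorem corner_injective (f : Fin n × Fin n) : Function.Injective (corner f) := by
  rintro ⟨a, b⟩ ⟨c, d⟩ h
  simp only [corner, Prod.mk.injEq, Fin.mk.injEq, Nat.add_left_cancel_iff] at h
  revert h
  cases a <;> cases b <;> cases c <;> cases d <;> decide

theorem le_succ_of_corner_eq {f f' : Fin n × Fin n} {p q : Bool × Bool}
    (h : corner f p = corner f' q) : (f.1 : ℕ) ≤ f'.1 + 1 ∧ (f.2 : ℕ) ≤ f'.2 + 1 := by
  simp only [corner, Prod.mk.injEq, Fin.mk.injEq] at h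
  have := q.1.toNat_le
  have := q.2.toNat_le
  omega

theorem map_squareEdge_mem_edgeSet (f : Fin n × Fin n) (j : Fin 4) :
    (squareEdge j).map (corner f) ∈ (mesh (n + 1)).edgeSet := by
  suffices ∀ e, (∃ j, squareEdge j = e) → e.map (corner f) ∈ (mesh (n + 1)).edgeSet from
    this _ ⟨j, rfl⟩
  intro e
  induction e using Sym2.ind with
  | _ p q => exact (mesh_adj_corner_iff f p q).2

def faceEdge (f : Fin n × Fin n) (j : Fin 4) : (mesh (n + 1)).edgeSet :=
  ⟨(squareEdge j).map (corner f), map_squareEdge_mem_edgeSet f j⟩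

theorem coe_faceEdge (f : Fin n × Fin n) (j : Fin 4) :
    (faceEdge f j : Sym2 _) = (squareEdge j).map (corner f) := rfl

theorem faceEdge_injective (f : Fin n × Fin n) : Function.Injective (faceEdge f) := by
  have hsq : Function.Injective squareEdge := by decide
  exact fun j j' h => hsq (Sym2.map.injective (corner_injective f) (congrArg Subtype.val h))

theorem exists_corner_eq_of_mem_faceEdge {f : Fin n × Fin n} {j : Fin 4}
    {x : Fin (n + 1) × Fin (n + 1)}
    (hx : x ∈ (faceEdge f j : Sym2 _)) : ∃ p, corner f p = x := by
  obtain ⟨p, -, hp⟩ := Sym2.mem_map.1 hx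
  exact ⟨p, hp⟩

theorem exists_faceEdge_eq_of_adj {f : Fin n × Fin n} {p q : Bool × Bool}
    (h : (mesh (n + 1)).Adj (corner f p) (corner f q)) :
    ∃ j, (faceEdge f j : Sym2 _) = s(corner f p, corner f q) := by
  obtain ⟨j, hj⟩ := (mesh_adj_corner_iff f p q).1 h
  exact ⟨j, by rw [coe_faceEdge, hj, Sym2.map_mk]⟩

theorem faceEdge_right_eq_left (r c : Fin n) (hc : (c : ℕ) + 1 < n) :
    faceEdge (r, c) 1 = faceEdge (r, ⟨c + 1, hc⟩) 3 :=
  Subtype.ext (Sym2.eq_swap.trans (by simp [faceEdge, squareEdge, corner]))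

theorem faceEdge_bottom_eq_top (r c : Fin n) (hr : (r : ℕ) + 1 < n) :
    faceEdge (r, c) 2 = faceEdge (⟨r + 1, hr⟩, c) 0 :=
  Subtype.ext (Sym2.eq_swap.trans (by simp [faceEdge, squareEdge, corner]))

end Faces

theorem edgeLabel_coe {n m : ℕ} (σ : Fin m ≃ (mesh n).edgeSet) (χ : Fin m → Bool)
    (e : (mesh n).edgeSet) : edgeLabel σ χ e = χ (σ.symm e) := by
  simp [edgeLabel, e.2]

abbrev faceIndex {n m : ℕ} (σ : Fin m ≃ (mesh (n + 1)).edgeSet) (f : Fin n × Fin n)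
    (j : Fin 4) : ℕ :=
  σ.symm (faceEdge f j)

/-- An edge-independent set of `k` faces split by the cut at `h`: `low i` and `high i` are the
chosen A- and B-edge of face `i`. -/
structure SplitFaces {n m : ℕ} (σ : Fin m ≃ (mesh (n + 1)).edgeSet) (h k : ℕ) where
  face : Fin k → Fin n × Fin n
  low : Fin k → Fin 4
  high : Fin k → Fin 4
  faceIndex_low_lt : ∀ i, faceIndex σ (face i) (low i) < h
  le_faceIndex_high : ∀ i, h ≤ faceIndex σ (face i) (high i)
  eq_of_corner_eq : ∀ i i' p p', corner (face i) p = corner (face i') p' → i = i'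

namespace SplitFaces

variable {n m h k : ℕ} {σ : Fin m ≃ (mesh (n + 1)).edgeSet} (S : SplitFaces σ h k)

theorem low_ne_high (i : Fin k) : S.low i ≠ S.high i := by
  intro he
  have := S.faceIndex_low_lt i
  have := S.le_faceIndex_high i
  rw [he] at *
  omega

theorem faceEdge_eq_faceEdge_iff {i i' : Fin k} {j j' : Fin 4} :
    faceEdge (S.face i) j = faceEdge (S.face i') j' ↔ i = i' ∧ j = j' := by
  refine ⟨fun he => ?_, by rintro ⟨rfl, rfl⟩; rfl⟩
  obtain ⟨x, hx⟩ : ∃ x, x ∈ (faceEdge (S.face i) j).1 := ⟨_, Sym2.out_fst_mem _⟩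
  obtain ⟨p, hp⟩ := exists_corner_eq_of_mem_faceEdge hx
  obtain ⟨p', hp'⟩ := exists_corner_eq_of_mem_faceEdge (he ▸ hx)
  obtain rfl := S.eq_of_corner_eq i i' p p' (hp.trans hp'.symm)
  exact ⟨rfl, faceEdge_injective _ he⟩

open scoped Classical in
/-- The assignment `α_y = β_y` of the fooling set: edges off the faces get `0`, unchosen sides
of the faces get `1`, and the two chosen sides of face `i` get `y i`. -/
noncomputable def assignment (y : Fin k → Bool) : Fin m → Bool := fun idx =>
  decide (∃ i j, σ idx = faceEdge (S.face i) j ∧ (j = S.low i ∨ j = S.high i → y i = true))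

theorem assignment_faceEdge (y : Fin k → Bool) (i : Fin k) (j : Fin 4) :
    S.assignment y (σ.symm (faceEdge (S.face i) j))
      = (decide (j ≠ S.low i ∧ j ≠ S.high i) || y i) := by
  simp only [assignment, Equiv.apply_symm_apply, S.faceEdge_eq_faceEdge_iff]
  by_cases hy : y i <;> simp [hy]

theorem assignment_of_ne_faceEdge (y : Fin k → Bool) {e : (mesh (n + 1)).edgeSet}
    (he : ∀ i j, e ≠ faceEdge (S.face i) j) : S.assignment y (σ.symm e) = false := by
  simp [assignment, he]

theorem edgeLabel_faceEdge (y z : Fin k → Bool) (i : Fin k) (j : Fin 4) :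
    edgeLabel σ (splice h (S.assignment y) (S.assignment z)) (faceEdge (S.face i) j)
      = if j = S.low i then y i else if j = S.high i then z i else true := by
  rw [edgeLabel_coe, splice]
  by_cases hlow : j = S.low i
  · subst hlow
    rw [if_pos (S.faceIndex_low_lt i), S.assignment_faceEdge]
    simp
  by_cases hhigh : j = S.high i
  · subst hhigh
    rw [if_neg (S.le_faceIndex_high i).not_gt, S.assignment_faceEdge]
    simp [hlow]
  · split <;> simp [S.assignment_faceEdge, hlow, hhigh]

theorem edgeLabel_of_ne_faceEdge (y z : Fin k → Bool) {e : (mesh (n + 1)).edgeSet}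
    (he : ∀ i j, e ≠ faceEdge (S.face i) j) :
    edgeLabel σ (splice h (S.assignment y) (S.assignment z)) e = false := by
  rw [edgeLabel_coe, splice]
  split <;> exact S.assignment_of_ne_faceEdge _ he

open scoped Classical in
noncomputable def potential (bit : Fin k → Bool × Bool → Bool)
    (x : Fin (n + 1) × Fin (n + 1)) :
    (Fin k × Bool) ⊕ (Fin (n + 1) × Fin (n + 1)) :=
  if hx : ∃ i p, corner (S.face i) p = x then
    .inl (hx.choose, bit hx.choose hx.choose_spec.choose)
  else .inr x

theorem potential_corner (bit : Fin k → Bool × Bool → Bool) (i : Fin k) (p : Bool × Bool) :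
    S.potential bit (corner (S.face i) p) = .inl (i, bit i p) := by
  have hx : ∃ i' p', corner (S.face i') p' = corner (S.face i) p := ⟨i, p, rfl⟩
  have hspec := hx.choose_spec.choose_spec
  rw [potential, dif_pos hx]
  generalize hx.choose_spec.choose = p' at hspec ⊢
  generalize hx.choose = i' at hspec ⊢
  obtain rfl := S.eq_of_corner_eq _ _ _ _ hspec
  obtain rfl := corner_injective _ hspec
  rfl

theorem exists_corner_of_potential_eq_inl {bit : Fin k → Bool × Bool → Bool}
    {x : Fin (n + 1) × Fin (n + 1)} {i : Fin k} {c : Bool}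
    (hx : S.potential bit x = .inl (i, c)) :
    ∃ p, corner (S.face i) p = x := by
  unfold potential at hx
  split at hx
  · rename_i hx'
    obtain ⟨rfl, -⟩ := Prod.mk.inj (Sum.inl_injective hx)
    exact hx'.choose_spec
  · cases hx

theorem eq_of_potential_eq_inr {bit : Fin k → Bool × Bool → Bool}
    {x x' : Fin (n + 1) × Fin (n + 1)} (hx : S.potential bit x = .inr x') : x = x' := by
  unfold potential at hx
  split at hx
  · cases hx
  · exact Sum.inr_injective hx

theorem potential_eq_iff (y : Fin k → Bool) {φ : Fin k → Bool × Bool → Bool}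
    (hφ : ∀ i j p q, squareEdge j = s(p, q) →
      (φ i p = φ i q ↔ j ≠ S.low i ∧ j ≠ S.high i))
    {a b : Fin (n + 1) × Fin (n + 1)} (hab : (mesh (n + 1)).Adj a b) :
    S.potential (fun i p => φ i p && !y i) a = S.potential (fun i p => φ i p && !y i) b ↔
      edgeLabel σ (splice h (S.assignment y) (S.assignment y)) s(a, b) = true := by
  set Φ := S.potential fun i p => φ i p && !y i
  change _ ↔ edgeLabel σ _ (⟨s(a, b), hab⟩ : (mesh (n + 1)).edgeSet) = true
  by_cases hface : ∃ i j, (⟨s(a, b), hab⟩ : (mesh (n + 1)).edgeSet) = faceEdge (S.face i) j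
  · obtain ⟨i, j, hij⟩ := hface
    have hmem : s(a, b) = (faceEdge (S.face i) j : Sym2 _) := congrArg Subtype.val hij
    obtain ⟨p, rfl⟩ := exists_corner_eq_of_mem_faceEdge (hmem ▸ Sym2.mem_mk_left a b)
    obtain ⟨q, rfl⟩ := exists_corner_eq_of_mem_faceEdge (hmem ▸ Sym2.mem_mk_right _ b)
    have hsq : squareEdge j = s(p, q) := by
      refine Sym2.map.injective (corner_injective (S.face i)) ?_
      rw [← coe_faceEdge, ← hmem, Sym2.map_mk]
    rw [hij, S.edgeLabel_faceEdge]
    simp only [Φ, S.potential_corner]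
    cases y i <;> simp [hφ i j p q hsq]
  · rw [S.edgeLabel_of_ne_faceEdge y y fun i j h => hface ⟨i, j, h⟩]
    simp only [Bool.false_eq_true, iff_false]
    intro hΦ
    rcases ha : Φ a with ⟨i, c⟩ | a'
    · obtain ⟨p, rfl⟩ := S.exists_corner_of_potential_eq_inl ha
      obtain ⟨q, rfl⟩ := S.exists_corner_of_potential_eq_inl (hΦ ▸ ha)
      obtain ⟨j, hj⟩ := exists_faceEdge_eq_of_adj hab
      exact hface ⟨i, j, Subtype.ext hj.symm⟩
    · obtain rfl := S.eq_of_potential_eq_inr ha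
      exact hab.ne (S.eq_of_potential_eq_inr (hΦ ▸ ha)).symm

theorem meshTransHolds_splice_self (y : Fin k → Bool) :
    MeshTransHolds (n + 1) m σ (splice h (S.assignment y) (S.assignment y)) := by
  choose φ hφ using fun i => exists_squareCut (S.low_ne_high i)
  exact meshTransHolds_of_potential _ fun a b hab => S.potential_eq_iff y hφ hab

theorem not_meshTransHolds_splice {y z : Fin k → Bool} {i : Fin k} (hyz : y i ≠ z i) :
    ¬ MeshTransHolds (n + 1) m σ (splice h (S.assignment y) (S.assignment z)) := by
  let v := corner (S.face i)
  let l := [v (false, false), v (false, true), v (true, true), v (true, false)]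
  let side : Fin 4 → (Fin (n + 1) × Fin (n + 1)) × (Fin (n + 1) × Fin (n + 1)) :=
    ![(v (false, false), v (false, true)), (v (false, true), v (true, true)),
      (v (true, true), v (true, false)), (v (true, false), v (false, false))]
  have hcycle : l.zip (l.rotate 1) = ([0, 1, 2, 3] : List (Fin 4)).map side := rfl
  have hside (j : Fin 4) : s((side j).1, (side j).2) = faceEdge (S.face i) j := by
    fin_cases j <;> rfl
  refine not_not_intro ⟨l, ⟨by simp [l], ?_⟩, ?_⟩
  · rw [hcycle]
    simp only [List.mem_map]
    rintro _ ⟨j, -, rfl⟩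
    rw [← SimpleGraph.mem_edgeSet, hside]
    exact (faceEdge (S.face i) j).2
  · rw [hcycle, List.filter_map, List.length_map]
    simp only [Function.comp_def, hside, S.edgeLabel_faceEdge]
    exact length_filter_square_eq_one (S.low_ne_high i) hyz

theorem two_pow_le_numNodes (S : SplitFaces σ h k) (D : OBDD m)
    (hD : ∀ χ, D.eval χ = true ↔ MeshTransHolds (n + 1) m σ χ) : 2 ^ k ≤ D.numNodes := by
  have := D.card_le_numNodes_of_fooling h S.assignment S.assignment
    (fun y => (hD _).2 (S.meshTransHolds_splice_self y)) fun y z hyz => ?_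
  · simpa using this
  obtain ⟨i, hi⟩ := Function.ne_iff.1 hyz
  exact Bool.eq_false_iff.2 fun ht => S.not_meshTransHolds_splice hi ((hD _).1 ht)

theorem nonempty_of_ladders (ladder : Fin k → Fin n → Fin n × Fin n)
    (hshare : ∀ t (c : ℕ) (hc : c + 1 < n),
      ∃ j j', faceEdge (ladder t ⟨c, by omega⟩) j = faceEdge (ladder t ⟨c + 1, hc⟩) j')
    (hlow : ∀ t, ∃ c j, faceIndex σ (ladder t c) j < h)
    (hhigh : ∀ t, ∃ c j, h ≤ faceIndex σ (ladder t c) j)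
    (hapart : ∀ t t' c c' p p', corner (ladder t c) p = corner (ladder t' c') p' → t = t') :
    Nonempty (SplitFaces σ h k) := by
  have hsplit t := exists_straddle_of_chain (fun c j => faceIndex σ (ladder t c) j) h
    (fun c hc => (hshare t c hc).imp fun _ =>
      .imp fun _ hj => congrArg (fun e => (σ.symm e : ℕ)) hj)
    (hlow t) (hhigh t)
  choose c low high hlow hhigh using hsplit
  exact ⟨⟨fun t => ladder t (c t), low, high, hlow, hhigh,
    fun t t' p p' he => hapart t t' _ _ p p' he⟩⟩

end SplitFaces

theorem exists_faceIndex_lt {n m : ℕ} (σ : Fin m ≃ (mesh (n + 1)).edgeSet) {f : Fin n × Fin n}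
    {M : ℕ} (hM : ∀ j, faceIndex σ f j ≤ M) : ∃ j, faceIndex σ f j < M := by
  have hne : faceIndex σ f 0 ≠ faceIndex σ f 1 := fun he =>
    absurd (faceEdge_injective f (σ.symm.injective (Fin.ext he))) (by decide)
  rcases lt_or_gt_of_ne hne with hlt | hlt
  exacts [⟨0, hlt.trans_le (hM 1)⟩, ⟨1, hlt.trans_le (hM 0)⟩]

theorem exists_splitFaces {n m : ℕ} (σ : Fin m ≃ (mesh (n + 1)).edgeSet) :
    ∃ h, Nonempty (SplitFaces σ h (n / 2)) := by
  rcases isEmpty_or_nonempty (Fin (n / 2)) with hk | ⟨⟨t₀⟩⟩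
  · exact ⟨0, ⟨⟨isEmptyElim, isEmptyElim, isEmptyElim, isEmptyElim, isEmptyElim,
      fun t => isEmptyElim t⟩⟩⟩
  let band : Fin (n / 2) → Fin n := fun t => ⟨2 * t, by omega⟩
  have hband t t' (h₁ : (band t : ℕ) ≤ band t' + 1) (h₂ : (band t' : ℕ) ≤ band t + 1) :
      t = t' :=
    Fin.ext (by simp only [band] at h₁ h₂; omega)
  let M t := Finset.univ.sup fun cj : Fin n × Fin 4 => faceIndex σ (band t, cj.1) cj.2
  have hle_M t c j : faceIndex σ (band t, c) j ≤ M t :=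
    Finset.le_sup (f := fun cj : Fin n × Fin 4 => faceIndex σ (band t, cj.1) cj.2)
      (Finset.mem_univ (c, j))
  -- cut just before the first even-numbered row of faces is read completely
  obtain ⟨t₁, -, ht₁⟩ := Finset.exists_min_image Finset.univ M ⟨t₀, Finset.mem_univ _⟩
  refine ⟨M t₁, ?_⟩
  by_cases hrows : ∀ t, ∃ c j, faceIndex σ (band t, c) j < M t₁
  · refine SplitFaces.nonempty_of_ladders (fun t c => (band t, c))
      (fun t c hc => ⟨1, 3, faceEdge_right_eq_left _ ⟨c, by omega⟩ hc⟩) hrows (fun t => ?_)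
      fun t t' _ _ _ _ he =>
        hband t t' (le_succ_of_corner_eq he).1 (le_succ_of_corner_eq he.symm).1
    obtain ⟨⟨c, j⟩, -, hcj⟩ := Finset.exists_mem_eq_sup Finset.univ
      ⟨(band t₀, 0), Finset.mem_univ _⟩
      fun cj : Fin n × Fin 4 => faceIndex σ (band t, cj.1) cj.2
    exact ⟨c, j, hcj ▸ ht₁ t (Finset.mem_univ _)⟩
  · push Not at hrows
    obtain ⟨t₂, ht₂⟩ := hrows
    refine SplitFaces.nonempty_of_ladders (fun t r => (r, band t))
      (fun t r hr => ⟨2, 0, faceEdge_bottom_eq_top ⟨r, by omega⟩ _ hr⟩)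
      (fun t => ⟨band t₁, exists_faceIndex_lt σ (hle_M t₁ (band t))⟩)
      (fun t => ⟨band t₂, 0, ht₂ _ _⟩) fun t t' _ _ _ _ he =>
        hband t t' (le_succ_of_corner_eq he).2 (le_succ_of_corner_eq he.symm).2

theorem two_pow_le_numNodes_of_meshTransHolds {N m : ℕ} (σ : Fin m ≃ (mesh N).edgeSet)
    (D : OBDD m) (hD : ∀ χ, D.eval χ = true ↔ MeshTransHolds N m σ χ) :
    2 ^ ((N - 1) / 2) ≤ D.numNodes := by
  cases N with
  | zero => simp [OBDD.numNodes]
  | succ n =>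
    obtain ⟨h, ⟨S⟩⟩ := exists_splitFaces σ
    simpa using S.two_pow_le_numNodes D hD

theorem rpow_le_two_pow (N : ℕ) : (2 : ℝ) ^ (((N : ℝ) - 3) / 4) ≤ 2 ^ ((N - 1) / 2) := by
  rw [← Real.rpow_natCast]
  refine Real.rpow_le_rpow_of_exponent_le one_le_two ?_
  have : (N : ℝ) ≤ 2 * ((N - 1) / 2 : ℕ) + 2 := by
    exact_mod_cast (by omega : N ≤ 2 * ((N - 1) / 2) + 2)
  linarith [((N - 1) / 2 : ℕ).cast_nonneg (α := ℝ)]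

theorem stmt19 :
    (∀ (m h k : ℕ) (F : (Fin m → Bool) → Bool)
        (a b : Fin (2 ^ k) → (Fin m → Bool)),
        (∀ y, F (fun i => if (i : ℕ) < h then a y i else b y i) = true) →
        (∀ y z, y ≠ z →
          F (fun i => if (i : ℕ) < h then a y i else b z i) = false) →
        ∀ D : OBDD m, (∀ χ, D.eval χ = F χ) → 2 ^ k ≤ D.numNodes) ∧
    (∀ (n m : ℕ) (σ : Fin m ≃ (mesh n).edgeSet) (D : OBDD m),
        (∀ χ, D.eval χ = true ↔ MeshTransHolds n m σ χ) →
        (2 : ℝ) ^ (((n : ℝ) - 3) / 4) ≤ (D.numNodes : ℝ)) := by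
  refine ⟨fun m h k F a b hdiag hoff D hD => ?_, fun n m σ D hD => ?_⟩
  · simpa using D.card_le_numNodes_of_fooling h a b (fun y => (hD _).trans (hdiag y))
      fun y z hyz => (hD _).trans (hoff y z hyz)
  · exact (rpow_le_two_pow n).trans
      (by exact_mod_cast two_pow_le_numNodes_of_meshTransHolds σ D hD)
end
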